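/- Let G be a finite connected graph, let V_1, …, V_t be the orbits of the natural action of Aut(G) on V(G), and let {F_1, …, F_k} be a partition of E(G) coarser than the Θ*-partition. Then Ŵ(G) = |V(G)| · Σ_{i=1}^{t} (1/|V_i|) · Σ_{j=1}^{k} W(G/F_j, w_{ij}), where w_{ij}(C) = |V_i ∩ C| for every vertex C of G/F_j (i.e. for every connected component C of G − F_j). -/

import Mathlib

open SimpleGraph

variable {V : Type*}

/-- The Djoković–Winkler relation Θ on edges of `G`. -/
def djokovicWinkler (G : SimpleGraph V) (e₁ e₂ : Sym2 V) : Prop :=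
  e₁ ∈ G.edgeSet ∧ e₂ ∈ G.edgeSet ∧
    ∃ u₁ v₁ u₂ v₂, e₁ = s(u₁, v₁) ∧ e₂ = s(u₂, v₂) ∧
      G.dist u₁ u₂ + G.dist v₁ v₂ ≠ G.dist u₁ v₂ + G.dist v₁ u₂

/-- Θ*, the transitive closure of the relation Θ. -/
def thetaStar (G : SimpleGraph V) : Sym2 V → Sym2 V → Prop :=
  Relation.TransGen (djokovicWinkler G)

/-- The quotient graph `G / F`: its vertices are the connected components of `G - F`,
two components being adjacent if some vertex of one is adjacent in `G` to some
vertex of the other. -/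
def quotientGraph (G : SimpleGraph V) (F : Set (Sym2 V)) :
    SimpleGraph (G.deleteEdges F).ConnectedComponent where
  Adj C D := C ≠ D ∧ ∃ x y : V, G.Adj x y ∧
    (G.deleteEdges F).connectedComponentMk x = C ∧
    (G.deleteEdges F).connectedComponentMk y = D
  symm := by
    refine ⟨?_⟩
    rintro C D ⟨hne, x, y, hadj, hx, hy⟩
    exact ⟨hne.symm, y, x, hadj.symm, hy, hx⟩
  loopless := by refine ⟨?_⟩; rintro C ⟨hne, -⟩; exact hne rfl

/-- The orbit of a vertex `u` under the natural action of `Aut(G)` on `V(G)`. -/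
def graphOrbit (G : SimpleGraph V) (u : V) : Set V :=
  {v | ∃ α : G ≃g G, α u = v}

/-- The Graovac–Pisanski index
`Ŵ(G) = (|V(G)| / (2|Aut(G)|)) ∑_{u ∈ V(G)} ∑_{α ∈ Aut(G)} d_G(u, α(u))`. -/
noncomputable def graovacPisanski [Fintype V] (G : SimpleGraph V) : ℝ :=
  ((Fintype.card V : ℝ) / (2 * (Nat.card (G ≃g G) : ℝ))) *
    ∑ u : V, ∑ᶠ α : G ≃g G, (G.dist u (α u) : ℝ)

/-- The vertex-weighted Wiener index
`W(H, w) = ½ ∑_{u ∈ V(H)} ∑_{v ∈ V(H)} w(u) w(v) d_H(u,v)`. -/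
noncomputable def weightedWiener {W : Type*} (H : SimpleGraph W) (w : W → ℝ) : ℝ :=
  (1 / 2) * ∑ᶠ u : W, ∑ᶠ v : W, w u * w v * (H.dist u v : ℝ)

/-!
Cut method: if `F` is a union of Θ*-classes, every geodesic `P` from `u` to `v` uses exactly
`d_{G/F}(u, v)` edges of `F`. Projecting `P` to `G/F` gives `≤`. For `≥`, lift a geodesic of
`G/F` to a walk `Q` of `G` and double count `δ(xy, ab) = d(x, a) + d(y, b) - d(x, b) - d(y, a)`
over the steps `xy` of `P` and `ab` of `Q`. It is nonzero only if `xy Θ ab`, so only on pairs of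
steps both in `F` or both outside `F`; summed along `Q` it telescopes to `-2` for each step of the
geodesic `P`, and summed along `P` to at least `-2` for each step of `Q`. Hence `Q` uses at least
as many edges of `F` as `P`, and summing over the partition gives `d_G = ∑ⱼ d_{G/Fⱼ}`.
By orbit–stabilizer, `∑_{α ∈ Aut G} d(u, α u) = |Aut G| / |Vᵢ| · ∑_{v ∈ Vᵢ} d(u, v)` for
`u ∈ Vᵢ`, and grouping the vertices of `Vᵢ` by component turns `∑_{u, v ∈ Vᵢ} d_{G/Fⱼ}(u, v)`
into `2 W(G/Fⱼ, wᵢⱼ)`.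
-/

open Finset Function

namespace SimpleGraph

variable {G : SimpleGraph V} {u v : V}

def IsThetaClosed (G : SimpleGraph V) (F : Set (Sym2 V)) : Prop :=
  ∀ ⦃e f⦄, e ∈ F → djokovicWinkler G e f → f ∈ F

noncomputable def thetaDefect (G : SimpleGraph V) (x y a b : V) : ℤ :=
  G.dist x a + G.dist y b - G.dist x b - G.dist y a

lemma thetaDefect_comm (x y a b : V) : G.thetaDefect x y a b = G.thetaDefect a b x y := by
  simp only [thetaDefect, dist_comm (u := x), dist_comm (u := y)]
  ring

lemma IsThetaClosed.mem_iff_of_thetaDefect_ne_zero {F : Set (Sym2 V)} (hF : G.IsThetaClosed F)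
    {x y a b : V} (hxy : G.Adj x y) (hab : G.Adj a b) (h : G.thetaDefect x y a b ≠ 0) :
    s(x, y) ∈ F ↔ s(a, b) ∈ F := by
  have h' := thetaDefect_comm x y a b ▸ h
  simp only [thetaDefect] at h h'
  exact ⟨fun he => hF he ⟨hxy, hab, x, y, a, b, rfl, rfl, by omega⟩,
    fun hf => hF hf ⟨hab, hxy, a, b, x, y, rfl, rfl, by omega⟩⟩

lemma Adj.neg_two_le_thetaDefect {x y : V} (h : G.Adj x y) (a b : V) :
    -2 ≤ G.thetaDefect x y a b := by
  have ha := h.diff_dist_adj (u := a)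
  have hb := h.diff_dist_adj (u := b)
  simp only [thetaDefect, dist_comm (u := x), dist_comm (u := y)]
  omega

lemma Walk.sum_thetaDefect (p : G.Walk u v) (x y : V) :
    ∑ i ∈ range p.length, G.thetaDefect x y (p.getVert i) (p.getVert (i + 1)) =
      G.thetaDefect x y u v := by
  let g i : ℤ := G.dist x (p.getVert i) - G.dist y (p.getVert i)
  calc _ = ∑ i ∈ range p.length, (g i - g (i + 1)) :=
        sum_congr rfl fun _ _ => by simp only [thetaDefect, g]; ring
    _ = _ := by
        rw [sum_range_sub']
        simp only [thetaDefect, g, p.getVert_zero, p.getVert_length]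
        ring

lemma Walk.thetaDefect_getVert_of_length_eq_dist {P : G.Walk u v} (hP : P.length = G.dist u v)
    {i : ℕ} (hi : i < P.length) :
    G.thetaDefect (P.getVert i) (P.getVert (i + 1)) u v = -2 := by
  have hle : ∀ i ∈ range P.length,
      -2 ≤ G.thetaDefect (P.getVert i) (P.getVert (i + 1)) u v := fun i hi =>
    (P.adj_getVert_succ (mem_range.mp hi)).neg_two_le_thetaDefect u v
  have htotal : ∑ _i ∈ range P.length, (-2 : ℤ) =
      ∑ i ∈ range P.length, G.thetaDefect (P.getVert i) (P.getVert (i + 1)) u v := by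
    rw [sum_congr rfl fun i _ => thetaDefect_comm _ _ u v, P.sum_thetaDefect]
    simp only [thetaDefect, sum_const, card_range, hP, dist_self, dist_comm (u := v),
      nsmul_eq_mul]
    ring
  exact ((sum_eq_sum_iff_of_le hle).mp htotal i (mem_range.mpr hi)).symm

lemma deleteEdges_connectedComponentMk_eq_of_adj (F : Set (Sym2 V)) {x y : V} (h : G.Adj x y)
    (hxy : s(x, y) ∉ F) :
    (G.deleteEdges F).connectedComponentMk x = (G.deleteEdges F).connectedComponentMk y :=
  ConnectedComponent.sound (deleteEdges_adj.mpr ⟨h, hxy⟩).reachable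

section crossings

variable (F : Set (Sym2 V)) [DecidablePred (· ∈ F)]

def Walk.crossings (p : G.Walk u v) : ℕ :=
  ∑ i ∈ range p.length, if s(p.getVert i, p.getVert (i + 1)) ∈ F then 1 else 0

lemma Walk.crossings_cons {x : V} (h : G.Adj u x) (p : G.Walk x v) :
    (Walk.cons h p).crossings F = (if s(u, x) ∈ F then 1 else 0) + p.crossings F := by
  simp only [crossings, length_cons, sum_range_succ', getVert_cons_succ, getVert_zero]
  exact add_comm _ _

theorem Walk.crossings_le_of_length_eq_dist (hF : G.IsThetaClosed F) {P : G.Walk u v}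
    (hP : P.length = G.dist u v) (Q : G.Walk u v) : P.crossings F ≤ Q.crossings F := by
  let x := P.getVert
  let a := Q.getVert
  let δ i j := G.thetaDefect (x i) (x (i + 1)) (a j) (a (j + 1))
  have hrow : ∀ i < P.length, ∑ j ∈ range Q.length, δ i j = -2 := fun i hi =>
    (Q.sum_thetaDefect _ _).trans (P.thetaDefect_getVert_of_length_eq_dist hP hi)
  have hcol : ∀ j < Q.length, -2 ≤ ∑ i ∈ range P.length, δ i j := fun j hj =>
    calc -2 ≤ G.thetaDefect (a j) (a (j + 1)) u v :=
          (Q.adj_getVert_succ hj).neg_two_le_thetaDefect u v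
      _ = ∑ i ∈ range P.length, δ i j := by
          rw [← P.sum_thetaDefect]
          exact sum_congr rfl fun i _ => thetaDefect_comm _ _ _ _
  have hδ : ∀ i < P.length, ∀ j < Q.length, δ i j ≠ 0 →
      (s(x i, x (i + 1)) ∈ F ↔ s(a j, a (j + 1)) ∈ F) := fun i hi j hj =>
    hF.mem_iff_of_thetaDefect_ne_zero (P.adj_getVert_succ hi) (Q.adj_getVert_succ hj)
  suffices (-2 : ℤ) * Q.crossings F ≤ -2 * P.crossings F by omega
  simp only [Walk.crossings, Nat.cast_sum, Nat.cast_ite, Nat.cast_one, Nat.cast_zero, mul_sum,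
    mul_ite, mul_one, mul_zero]
  calc ∑ j ∈ range Q.length, (if s(a j, a (j + 1)) ∈ F then -2 else 0)
      ≤ ∑ j ∈ range Q.length, ∑ i ∈ range P.length,
          (if s(a j, a (j + 1)) ∈ F then δ i j else 0) := by
        refine sum_le_sum fun j hj => ?_
        rw [sum_ite_irrel, sum_const_zero]
        split_ifs
        exacts [hcol j (mem_range.mp hj), le_rfl]
    _ = ∑ i ∈ range P.length, ∑ j ∈ range Q.length,
          (if s(x i, x (i + 1)) ∈ F then δ i j else 0) := by
        rw [sum_comm]
        refine sum_congr rfl fun i hi => sum_congr rfl fun j hj => ?_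
        by_cases h0 : δ i j = 0
        · simp [h0]
        · simp only [hδ i (mem_range.mp hi) j (mem_range.mp hj) h0]
    _ = ∑ i ∈ range P.length, (if s(x i, x (i + 1)) ∈ F then -2 else 0) := by
        refine sum_congr rfl fun i hi => ?_
        rw [sum_ite_irrel, sum_const_zero, hrow i (mem_range.mp hi)]

lemma Walk.exists_quotientGraph_walk_length_le (p : G.Walk u v) :
    ∃ w : (quotientGraph G F).Walk ((G.deleteEdges F).connectedComponentMk u)
      ((G.deleteEdges F).connectedComponentMk v), w.length ≤ p.crossings F := by
  induction p with
  | nil => exact ⟨.nil, le_rfl⟩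
  | @cons u x v h p ih =>
    obtain ⟨w, hw⟩ := ih
    rw [crossings_cons]
    by_cases hux : (G.deleteEdges F).connectedComponentMk u =
        (G.deleteEdges F).connectedComponentMk x
    · exact ⟨w.copy hux.symm rfl, by rw [length_copy]; omega⟩
    · have hmem : s(u, x) ∈ F :=
        by_contra fun hm => hux (deleteEdges_connectedComponentMk_eq_of_adj F h hm)
      refine ⟨.cons (show (quotientGraph G F).Adj _ _ from ⟨hux, u, x, h, rfl, rfl⟩) w, ?_⟩
      rw [length_cons, if_pos hmem]
      omega

lemma Reachable.exists_walk_crossings_eq {x y : V} (hxy : (G.deleteEdges F).Reachable x y)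
    (p : G.Walk y v) : ∃ q : G.Walk x v, q.crossings F = p.crossings F := by
  obtain ⟨r⟩ := hxy
  induction r with
  | nil => exact ⟨p, rfl⟩
  | cons h r ih =>
    obtain ⟨q, hq⟩ := ih p
    refine ⟨.cons (deleteEdges_adj.mp h).1 q, ?_⟩
    rw [Walk.crossings_cons, if_neg (deleteEdges_adj.mp h).2, hq, zero_add]

lemma Walk.exists_lift_crossings_le {C D : (G.deleteEdges F).ConnectedComponent}
    (w : (quotientGraph G F).Walk C D) (x y : V)
    (hx : (G.deleteEdges F).connectedComponentMk x = C)
    (hy : (G.deleteEdges F).connectedComponentMk y = D) :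
    ∃ p : G.Walk x y, p.crossings F ≤ w.length := by
  revert hx hy
  induction w generalizing x with
  | nil =>
    intro hx hy
    obtain ⟨p, hp⟩ :=
      (ConnectedComponent.exact (hx.trans hy.symm)).exists_walk_crossings_eq F .nil
    exact ⟨p, hp.le⟩
  | cons hadj w ih =>
    intro hx hy
    rw [length_cons]
    obtain ⟨-, a, b, hab, ha, hb⟩ := hadj
    obtain ⟨q, hq⟩ := ih b hb hy
    obtain ⟨p, hp⟩ := (ConnectedComponent.exact (hx.trans ha.symm)).exists_walk_crossings_eq F
      (.cons hab q)
    refine ⟨p, ?_⟩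
    rw [hp, crossings_cons]
    split_ifs <;> omega

theorem quotientGraph_dist_eq_crossings (hF : G.IsThetaClosed F) {P : G.Walk u v}
    (hP : P.length = G.dist u v) :
    (quotientGraph G F).dist ((G.deleteEdges F).connectedComponentMk u)
      ((G.deleteEdges F).connectedComponentMk v) = P.crossings F := by
  obtain ⟨w, hw⟩ := P.exists_quotientGraph_walk_length_le F
  refine le_antisymm ((dist_le w).trans hw) ?_
  obtain ⟨w', hw'⟩ := w.reachable.exists_walk_length_eq_dist
  obtain ⟨Q, hQ⟩ := w'.exists_lift_crossings_le F u v rfl rfl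
  exact (P.crossings_le_of_length_eq_dist F hF hP Q).trans (hQ.trans hw'.le)

end crossings

theorem Walk.sum_crossings_eq_length {ι : Type*} [Fintype ι] {F : ι → Set (Sym2 V)}
    [∀ j, DecidablePred (· ∈ F j)] (hdisj : Pairwise (Disjoint on F))
    (hcover : ⋃ j, F j = G.edgeSet) (p : G.Walk u v) :
    ∑ j, p.crossings (F j) = p.length := by
  simp only [crossings]
  rw [sum_comm]
  refine (sum_congr rfl fun i hi => ?_).trans (card_eq_sum_ones (range p.length) ▸ card_range _)
  have he : s(p.getVert i, p.getVert (i + 1)) ∈ ⋃ j, F j := by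
    rw [hcover]
    exact p.adj_getVert_succ (mem_range.mp hi)
  obtain ⟨j₀, hj₀⟩ := Set.mem_iUnion.mp he
  rw [sum_eq_single j₀ (fun j _ hj => if_neg fun h => (hdisj hj).notMem_of_mem_left h hj₀)
    (fun h => absurd (mem_univ j₀) h), if_pos hj₀]

theorem Connected.dist_eq_sum_quotientGraph_dist (hG : G.Connected) {ι : Type*} [Fintype ι]
    {F : ι → Set (Sym2 V)} (hdisj : Pairwise (Disjoint on F)) (hcover : ⋃ j, F j = G.edgeSet)
    (hF : ∀ j, G.IsThetaClosed (F j)) (u v : V) :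
    G.dist u v = ∑ j, (quotientGraph G (F j)).dist
      ((G.deleteEdges (F j)).connectedComponentMk u)
      ((G.deleteEdges (F j)).connectedComponentMk v) := by
  classical
  obtain ⟨P, hP⟩ := hG.exists_walk_length_eq_dist u v
  simp only [quotientGraph_dist_eq_crossings _ (hF _) hP]
  rw [P.sum_crossings_eq_length hdisj hcover, hP]

end SimpleGraph

theorem MulAction.card_nsmul_sum_smul {G X M : Type*} [Group G] [MulAction G X] [Fintype G]
    [AddCommMonoid M] {b : X} {S : Finset X} (hS : (S : Set X) = orbit G b) (f : X → M) :
    #S • ∑ g : G, f (g • b) = Fintype.card G • ∑ x ∈ S, f x := by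
  classical
  have hmaps : ∀ g ∈ (univ : Finset G), g • b ∈ S := fun g _ => by
    rw [← mem_coe, hS]
    exact mem_orbit b g
  have hfiber : ∀ x ∈ S, #{g | g • b = x} = #{g : G | g • b = b} := fun x hx => by
    obtain ⟨h, rfl⟩ : x ∈ orbit G b := hS ▸ hx
    refine card_equiv (Equiv.mulLeft h⁻¹) fun g => ?_
    simp [mul_smul, inv_smul_eq_iff]
  have hsum : ∑ g : G, f (g • b) = ∑ x ∈ S, #{g : G | g • b = b} • f x := by
    rw [← sum_fiberwise_of_maps_to' hmaps]
    exact sum_congr rfl fun x hx => by rw [sum_const, hfiber x hx]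
  have hcard : Fintype.card G = #S * #{g : G | g • b = b} := by
    rw [← card_univ, card_eq_sum_card_fiberwise hmaps, sum_congr rfl hfiber, sum_const,
      smul_eq_mul]
  rw [hsum, hcard, ← smul_sum, smul_smul, mul_smul]

theorem Fintype.sum_eq_sum_sum_toFinset {ι V M : Type*} [Fintype ι] [Fintype V]
    [AddCommMonoid M] (s : ι → Set V) [∀ i, Fintype (s i)] (h : ∀ x, ∃! i, x ∈ s i)
    (f : V → M) : ∑ x, f x = ∑ i, ∑ x ∈ (s i).toFinset, f x := by
  rw [← (Set.sigmaEquiv s h).sum_comp, Fintype.sum_sigma]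
  exact Finset.sum_congr rfl fun i _ => (sum_subtype _ (fun _ => Set.mem_toFinset) _).symm

theorem Finset.sum_comp_eq_sum_ncard_mul {V W R : Type*} [Fintype W] [NonAssocSemiring R]
    (π : V → W) (S : Finset V) (f : W → R) :
    ∑ u ∈ S, f (π u) = ∑ C, ((S : Set V) ∩ π ⁻¹' {C}).ncard * f C := by
  classical
  rw [← sum_fiberwise' S π f]
  refine sum_congr rfl fun C _ => ?_
  rw [sum_const, nsmul_eq_mul, ← Set.ncard_coe_finset, coe_filter]
  rfl

theorem two_mul_weightedWiener_ncard_inter_preimage {V W : Type*} [Finite W]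
    (H : SimpleGraph W) (π : V → W) (S : Finset V) :
    2 * weightedWiener H (fun C => (((S : Set V) ∩ π ⁻¹' {C}).ncard : ℝ)) =
      ∑ u ∈ S, ∑ v ∈ S, (H.dist (π u) (π v) : ℝ) := by
  have := Fintype.ofFinite W
  set w : W → ℝ := fun C => (((S : Set V) ∩ π ⁻¹' {C}).ncard : ℝ)
  calc 2 * weightedWiener H w = ∑ C, w C * ∑ D, w D * (H.dist C D : ℝ) := by
        simp only [weightedWiener, finsum_eq_sum_of_fintype, mul_sum]
        exact sum_congr rfl fun _ _ => sum_congr rfl fun _ _ => by ring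
    _ = ∑ u ∈ S, ∑ D, w D * (H.dist (π u) D : ℝ) :=
        (sum_comp_eq_sum_ncard_mul π S fun C => ∑ D, w D * (H.dist C D : ℝ)).symm
    _ = ∑ u ∈ S, ∑ v ∈ S, (H.dist (π u) (π v) : ℝ) :=
        sum_congr rfl fun u _ =>
          (sum_comp_eq_sum_ncard_mul π S fun D => (H.dist (π u) D : ℝ)).symm

namespace SimpleGraph

instance Iso.finite {W : Type*} [Finite V] [Finite W] {G : SimpleGraph V} {G' : SimpleGraph W} :
    Finite (G ≃g G') :=
  Finite.of_injective _ RelIso.toEquiv_injective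

theorem finsum_aut_apply_eq [Fintype V] {G : SimpleGraph V} {u : V} {S : Set V} [Fintype S]
    (hS : graphOrbit G u = S) (f : V → ℝ) :
    ∑ᶠ α : G ≃g G, f (α u) = Nat.card (G ≃g G) / S.ncard * ∑ v ∈ S.toFinset, f v := by
  have := Fintype.ofFinite (G ≃g G)
  have h := MulAction.card_nsmul_sum_smul (b := u) (S := S.toFinset)
    (by rw [Set.coe_toFinset, ← hS]; rfl) f
  have hpos : 0 < S.ncard := (Set.ncard_pos (Set.toFinite _)).mpr ⟨u, hS ▸ ⟨1, rfl⟩⟩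
  rw [← Set.ncard_eq_toFinset_card', nsmul_eq_mul, nsmul_eq_mul] at h
  rw [finsum_eq_sum_of_fintype, Nat.card_eq_fintype_card, div_mul_eq_mul_div,
    eq_div_iff (by positivity), mul_comm]
  exact h

theorem Connected.sum_weightedWiener_quotientGraph [Fintype V] {G : SimpleGraph V}
    (hG : G.Connected) {ι : Type*} [Fintype ι] {F : ι → Set (Sym2 V)}
    (hdisj : Pairwise (Disjoint on F)) (hcover : ⋃ j, F j = G.edgeSet)
    (hF : ∀ j, G.IsThetaClosed (F j)) (S : Set V) [Fintype S] :
    ∑ j, weightedWiener (quotientGraph G (F j)) (fun C => ((S ∩ C.supp).ncard : ℝ)) =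
      1 / 2 * ∑ u ∈ S.toFinset, ∑ v ∈ S.toFinset, (G.dist u v : ℝ) := by
  have hW : ∀ j, 2 * weightedWiener (quotientGraph G (F j))
      (fun C => ((S ∩ C.supp).ncard : ℝ)) =
      ∑ u ∈ S.toFinset, ∑ v ∈ S.toFinset, ((quotientGraph G (F j)).dist
        ((G.deleteEdges (F j)).connectedComponentMk u)
        ((G.deleteEdges (F j)).connectedComponentMk v) : ℝ) := fun j => by
    have h := two_mul_weightedWiener_ncard_inter_preimage
      (quotientGraph G (F j)) (G.deleteEdges (F j)).connectedComponentMk S.toFinset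
    rw [Set.coe_toFinset] at h
    exact h
  calc _ = 1 / 2 * ∑ j, 2 * weightedWiener (quotientGraph G (F j))
          (fun C => ((S ∩ C.supp).ncard : ℝ)) := by
        rw [mul_sum]
        exact sum_congr rfl fun _ _ => by ring
    _ = _ := by
        simp only [hW, hG.dist_eq_sum_quotientGraph_dist hdisj hcover hF, Nat.cast_sum]
        rw [sum_comm]
        exact congrArg _ (sum_congr rfl fun _ _ => sum_comm)

end SimpleGraph

theorem graovacPisanski_eq_sum_weightedWiener_general [Fintype V] (G : SimpleGraph V)
    (hG : G.Connected) (t k : ℕ)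
    (Vo : Fin t → Set V)
    (hVo : ∀ i, ∃ u, Vo i = graphOrbit G u)
    (hVo' : ∀ u, ∃ i, graphOrbit G u = Vo i)
    (hVoInj : Function.Injective Vo)
    (F : Fin k → Set (Sym2 V))
    (hdisj : ∀ j j', j ≠ j' → Disjoint (F j) (F j'))
    (hcover : ⋃ j, F j = G.edgeSet)
    (hcoarse : ∀ j, ∀ e ∈ F j, ∀ e', thetaStar G e e' → e' ∈ F j) :
    graovacPisanski G = (Fintype.card V : ℝ) *
      ∑ i : Fin t, (1 / ((Vo i).ncard : ℝ)) *
        ∑ j : Fin k, weightedWiener (quotientGraph G (F j))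
          (fun C => ((Vo i ∩ C.supp).ncard : ℝ)) := by
  classical
  have horbit : ∀ i, ∀ u ∈ Vo i, graphOrbit G u = Vo i := fun i u hu => by
    obtain ⟨w, hw⟩ := hVo i
    rw [hw] at hu ⊢
    exact MulAction.orbit_eq_iff.mpr hu
  have hunique : ∀ u, ∃! i, u ∈ Vo i := fun u => by
    obtain ⟨i, hi⟩ := hVo' u
    have hu : u ∈ Vo i := hi ▸ MulAction.mem_orbit_self u
    exact ⟨i, hu, fun i' hi' => hVoInj ((horbit i' u hi').symm.trans (horbit i u hu))⟩
  have hF : ∀ j, G.IsThetaClosed (F j) := fun j _ _ he hef => hcoarse j _ he _ (.single hef)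
  have hA : (Nat.card (G ≃g G) : ℝ) ≠ 0 := Nat.cast_ne_zero.mpr Nat.card_pos.ne'
  unfold graovacPisanski
  rw [Fintype.sum_eq_sum_sum_toFinset Vo hunique, mul_sum, mul_sum]
  refine sum_congr rfl fun i _ => ?_
  rw [hG.sum_weightedWiener_quotientGraph (fun j j' => hdisj j j') hcover hF,
    sum_congr rfl fun u hu => finsum_aut_apply_eq (horbit i u (Set.mem_toFinset.mp hu))
      fun v => (G.dist u v : ℝ),
    ← mul_sum]
  field_simp

/-- Let `G` be a finite connected graph, let `Vo 0, …, Vo (t-1)` be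
(an enumeration without repetitions of) the orbits of the natural action of `Aut(G)`
on `V(G)`, and let `{F 0, …, F (k-1)}` be a partition of `E(G)` coarser than the
Θ*-partition. Then
`Ŵ(G) = |V(G)| ∑_i (1/|V_i|) ∑_j W(G/F_j, w_{ij})`, where `w_{ij}(C) = |V_i ∩ C|`
for every connected component `C` of `G - F j`. -/
theorem graovacPisanski_eq_sum_weightedWiener [Fintype V] (G : SimpleGraph V)
    (hG : G.Connected) (t k : ℕ)
    (Vo : Fin t → Set V)
    (hVo : ∀ i, ∃ u, Vo i = graphOrbit G u)
    (hVo' : ∀ u, ∃ i, graphOrbit G u = Vo i)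
    (hVoInj : Function.Injective Vo)
    (F : Fin k → Set (Sym2 V))
    (hne : ∀ j, (F j).Nonempty)
    (hdisj : ∀ j j', j ≠ j' → Disjoint (F j) (F j'))
    (hcover : ⋃ j, F j = G.edgeSet)
    (hcoarse : ∀ j, ∀ e ∈ F j, ∀ e', thetaStar G e e' → e' ∈ F j) :
    graovacPisanski G = (Fintype.card V : ℝ) *
      ∑ i : Fin t, (1 / ((Vo i).ncard : ℝ)) *
        ∑ j : Fin k, weightedWiener (quotientGraph G (F j))
          (fun C => ((Vo i ∩ C.supp).ncard : ℝ)) :=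
  graovacPisanski_eq_sum_weightedWiener_general G hG t k Vo hVo hVo' hVoInj F hdisj hcover hcoarse
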